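/- arXiv:0910.0644 — 2 statements merged into one kernel-verified Lean document; each statement's English description precedes it below -/
import Mathlib

section
/- Let R be a commutative ring, I an ideal of R, and P a prime ideal of R with I ⊄ P. Set P₀ = {(p, p+i) : p ∈ P, i ∈ I ∩ P}, P₁ = {(p, p+i) : p ∈ P, i ∈ I}, and P₂ = {(p+i, p) : p ∈ P, i ∈ I}. Then P₁ ≠ P₂, P₁ ∩ P₂ = P₀, and both localizations (R⋈I)_{P₁} and (R⋈I)_{P₂} are ring-isomorphic to the localization R_P of R at P. -/
universe u

open scoped TensorProduct

namespace Paper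

/-- The amalgamated duplication `R ⋈ I`, as the subring
`{(r, s) : s - r ∈ I} = {(r, r+i) : r ∈ R, i ∈ I}` of `R × R`. -/
def dup (R : Type*) [CommRing R] (I : Ideal R) : Subring (R × R) where
  carrier := {p | p.2 - p.1 ∈ I}
  zero_mem' := by simp
  one_mem' := by simp
  add_mem' := by
    intro a b ha hb
    simp only [Set.mem_setOf_eq, Prod.fst_add, Prod.snd_add] at *
    have h : a.2 + b.2 - (a.1 + b.1) = (a.2 - a.1) + (b.2 - b.1) := by ring
    rw [h]; exact I.add_mem ha hb
  neg_mem' := by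
    intro a ha
    simp only [Set.mem_setOf_eq, Prod.fst_neg, Prod.snd_neg] at *
    have h : -a.2 - -a.1 = -(a.2 - a.1) := by ring
    rw [h]; exact I.neg_mem ha
  mul_mem' := by
    intro a b ha hb
    simp only [Set.mem_setOf_eq, Prod.fst_mul, Prod.snd_mul] at *
    have h : a.2 * b.2 - a.1 * b.1 = a.2 * (b.2 - b.1) + (a.2 - a.1) * b.1 := by ring
    rw [h]; exact I.add_mem (I.mul_mem_left _ hb) (I.mul_mem_right _ ha)

lemma mem_dup {R : Type*} [CommRing R] {I : Ideal R} {p : R × R} :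
    p ∈ dup R I ↔ p.2 - p.1 ∈ I := Iff.rfl

/-- The diagonal embedding `R → R ⋈ I`, `r ↦ (r, r)`. -/
def diag (R : Type*) [CommRing R] (I : Ideal R) : R →+* dup R I where
  toFun r := ⟨(r, r), mem_dup.mpr (by simp)⟩
  map_one' := rfl
  map_mul' _ _ := rfl
  map_zero' := rfl
  map_add' _ _ := rfl

noncomputable instance dupAlgebra (R : Type*) [CommRing R] (I : Ideal R) :
    Algebra R (dup R I) := (diag R I).toAlgebra

/-- `pdLE R n M` means that `M` has projective dimension `≤ n` as an `R`-module. -/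
def pdLE (R : Type u) [CommRing R] : ℕ → (M : Type u) → [AddCommGroup M] → [Module R M] → Prop
  | 0, M, _, _ => Module.Projective R M
  | (n + 1), M, _, _ => pdLE R n (LinearMap.ker (Finsupp.linearCombination R (id : M → M)))

/-- `fdLE R n M` means that `M` has flat dimension `≤ n` as an `R`-module. -/
def fdLE (R : Type u) [CommRing R] : ℕ → (M : Type u) → [AddCommGroup M] → [Module R M] → Prop
  | 0, M, _, _ => Module.Flat R M
  | (n + 1), M, _, _ => fdLE R n (LinearMap.ker (Finsupp.linearCombination R (id : M → M)))

/-- The projective dimension of an `R`-module `M`, as an element of `ℕ∞`. -/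
noncomputable def projDim (R : Type u) [CommRing R] (M : Type u) [AddCommGroup M]
    [Module R M] : ℕ∞ :=
  sInf {n : ℕ∞ | ∃ k : ℕ, (k : ℕ∞) = n ∧ pdLE R k M}

/-- The flat dimension of an `R`-module `M`, as an element of `ℕ∞`. -/
noncomputable def flatDim (R : Type u) [CommRing R] (M : Type u) [AddCommGroup M]
    [Module R M] : ℕ∞ :=
  sInf {n : ℕ∞ | ∃ k : ℕ, (k : ℕ∞) = n ∧ fdLE R k M}

/-- The global dimension of `R`: the supremum of projective dimensions of `R`-modules. -/
noncomputable def gldim (R : Type u) [CommRing R] : ℕ∞ :=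
  ⨆ (M : Type u) (_ : AddCommGroup M) (_ : Module R M), projDim R M

/-- The weak global dimension of `R`: the supremum of flat dimensions of `R`-modules. -/
noncomputable def wdim (R : Type u) [CommRing R] : ℕ∞ :=
  ⨆ (M : Type u) (_ : AddCommGroup M) (_ : Module R M), flatDim R M


/-- The first projection `R ⋈ I → R`, `(r, r+i) ↦ r`. -/
def dupFst (R : Type*) [CommRing R] (I : Ideal R) : dup R I →+* R :=
  (RingHom.fst R R).comp (dup R I).subtype

/-- The second projection `R ⋈ I → R`, `(r, r+i) ↦ r + i`. -/
def dupSnd (R : Type*) [CommRing R] (I : Ideal R) : dup R I →+* R :=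
  (RingHom.snd R R).comp (dup R I).subtype

/-- A commutative ring is von Neumann regular if every `a` satisfies `a = a²b` for some `b`. -/
def IsVNRegular (R : Type*) [CommRing R] : Prop := ∀ a : R, ∃ b : R, a = a * a * b

/-- A commutative ring is semihereditary if every finitely generated ideal is projective. -/
def IsSemihereditary (R : Type*) [CommRing R] : Prop :=
  ∀ J : Ideal R, J.FG → Module.Projective R J

/-- A commutative ring is coherent if every finitely generated ideal is finitely presented. -/
def IsCoherentRing (R : Type*) [CommRing R] : Prop :=
  ∀ J : Ideal R, J.FG → Module.FinitePresentation R J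

/-- The content of a polynomial: the ideal generated by its coefficients. -/
def contentIdeal {R : Type*} [CommRing R] (f : Polynomial R) : Ideal R :=
  Ideal.span (Set.range f.coeff)

/-- A commutative ring is Gaussian if `c(fg) = c(f)c(g)` for all polynomials `f, g`. -/
def IsGaussianRing (R : Type*) [CommRing R] : Prop :=
  ∀ f g : Polynomial R, contentIdeal (f * g) = contentIdeal f * contentIdeal g

/-- `R` is a `(1,d)`-ring if every finitely presented (i.e. `1`-presented) `R`-module has
projective dimension at most `d`. -/
def IsOneDRing (R : Type u) [CommRing R] (d : ℕ) : Prop :=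
  ∀ (M : Type u) [AddCommGroup M] [Module R M],
    Module.FinitePresentation R M → projDim R M ≤ (d : ℕ∞)

/-- The trace ideal of an `R`-module `M`: the sum of the images of all `R`-linear maps
`M → R`. -/
def traceIdeal (R : Type*) [CommRing R] (M : Type*) [AddCommGroup M] [Module R M] : Ideal R :=
  ⨆ f : M →ₗ[R] R, LinearMap.range f

/- The two projections `R ⋈ I → R` are surjective, and the kernel of each is annihilated by an
element lying outside the contracted prime: `(a, 0)`, resp. `(0, a)`, for any `a ∈ I \ P`.
Localizing at `P₁ = (dupFst)⁻¹(P)` (resp. `P₂`) makes that element a unit, so the kernel dies and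
the localization is `R_P`. The element `(0, a)` lies in `P₁` but not in `P₂`, so `P₁ ≠ P₂`. -/

theorem IsLocalization.atPrime_comap_of_surjective {S R T : Type*} [CommRing S] [CommRing R]
    [CommRing T] [Algebra S T] [Algebra R T] {f : S →+* R} (hf : Function.Surjective f)
    (hfT : algebraMap S T = (algebraMap R T).comp f) (P : Ideal R) [P.IsPrime]
    [IsLocalization.AtPrime T P] (hker : ∀ x ∈ RingHom.ker f, ∃ s, f s ∉ P ∧ s * x = 0) :
    IsLocalization.AtPrime T (P.comap f) := by
  refine ⟨fun s ↦ ?_, fun z ↦ ?_, fun {x y} hxy ↦ ?_⟩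
  · rw [hfT]
    exact IsLocalization.map_units (M := P.primeCompl) T ⟨f s, s.2⟩
  · obtain ⟨⟨r, t⟩, hz⟩ := IsLocalization.surj P.primeCompl z
    obtain ⟨r', rfl⟩ := hf r
    obtain ⟨t', ht'⟩ := hf t
    exact ⟨⟨r', ⟨t', show f t' ∈ P.primeCompl from ht' ▸ t.2⟩⟩, by simpa [hfT, ht'] using hz⟩
  · rw [hfT] at hxy
    obtain ⟨c, hc⟩ := (IsLocalization.eq_iff_exists P.primeCompl T).mp hxy
    obtain ⟨c', hc'⟩ := hf c
    obtain ⟨s, hsP, hs⟩ := hker (c' * (x - y)) (by simp [RingHom.mem_ker, hc', mul_sub, hc])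
    refine ⟨⟨s * c', ?_⟩, by simpa [mul_sub, sub_eq_zero, mul_assoc] using hs⟩
    show f (s * c') ∉ P
    rw [map_mul, hc']
    exact Ideal.IsPrime.mul_notMem ‹_› hsP c.2

theorem nonempty_ringEquiv_localization_comap_of_surjective {S R : Type*} [CommRing S]
    [CommRing R] {f : S →+* R} (hf : Function.Surjective f) (P : Ideal R) [P.IsPrime]
    (hker : ∀ x ∈ RingHom.ker f, ∃ s, f s ∉ P ∧ s * x = 0) :
    Nonempty (Localization.AtPrime (P.comap f) ≃+* Localization.AtPrime P) := by
  let : Algebra S (Localization.AtPrime P) := ((algebraMap R _).comp f).toAlgebra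
  have := IsLocalization.atPrime_comap_of_surjective (T := Localization.AtPrime P) hf rfl P hker
  exact ⟨(IsLocalization.algEquiv (P.comap f).primeCompl _ _).toRingEquiv⟩

section Duplication

variable {R : Type*} [CommRing R] {I : Ideal R}

@[simp]
theorem dupFst_apply (x : dup R I) : dupFst R I x = (x : R × R).1 := rfl

@[simp]
theorem dupSnd_apply (x : dup R I) : dupSnd R I x = (x : R × R).2 := rfl

theorem dupFst_surjective : Function.Surjective (dupFst R I) :=
  fun r ↦ ⟨diag R I r, rfl⟩

theorem dupSnd_surjective : Function.Surjective (dupSnd R I) :=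
  fun r ↦ ⟨diag R I r, rfl⟩

theorem exists_mul_eq_zero_of_mem_ker_dupFst {a : R} (ha : a ∈ I) {x : dup R I}
    (hx : x ∈ RingHom.ker (dupFst R I)) : ∃ s, dupFst R I s = a ∧ s * x = 0 := by
  refine ⟨⟨(a, 0), mem_dup.mpr (by simpa using ha)⟩, rfl, Subtype.ext ?_⟩
  simp [Prod.ext_iff, show (x : R × R).1 = 0 from hx]

theorem exists_mul_eq_zero_of_mem_ker_dupSnd {a : R} (ha : a ∈ I) {x : dup R I}
    (hx : x ∈ RingHom.ker (dupSnd R I)) : ∃ s, dupSnd R I s = a ∧ s * x = 0 := by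
  refine ⟨⟨(0, a), mem_dup.mpr (by simpa using ha)⟩, rfl, Subtype.ext ?_⟩
  simp [Prod.ext_iff, show (x : R × R).2 = 0 from hx]

variable (P : Ideal R)

theorem coe_comap_dupFst : ((P.comap (dupFst R I) : Ideal (dup R I)) : Set (dup R I)) =
    {x : dup R I | ∃ p ∈ P, ∃ i ∈ I, (x : R × R) = (p, p + i)} := by
  ext x
  refine ⟨fun hx ↦ ⟨_, hx, (x : R × R).2 - (x : R × R).1, x.2, by simp⟩, ?_⟩
  rintro ⟨p, hp, i, -, hx⟩
  simpa [hx] using hp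

theorem coe_comap_dupSnd : ((P.comap (dupSnd R I) : Ideal (dup R I)) : Set (dup R I)) =
    {x : dup R I | ∃ p ∈ P, ∃ i ∈ I, (x : R × R) = (p + i, p)} := by
  ext x
  refine ⟨fun hx ↦ ⟨_, hx, (x : R × R).1 - (x : R × R).2, by simpa using I.neg_mem x.2,
    by simp⟩, ?_⟩
  rintro ⟨p, hp, i, -, hx⟩
  simpa [hx] using hp

theorem coe_comap_dupFst_inf_comap_dupSnd :
    ((P.comap (dupFst R I) ⊓ P.comap (dupSnd R I) : Ideal (dup R I)) : Set (dup R I)) =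
      {x : dup R I | ∃ p ∈ P, ∃ i, i ∈ I ∧ i ∈ P ∧ (x : R × R) = (p, p + i)} := by
  ext x
  constructor
  · rintro ⟨h₁, h₂⟩
    exact ⟨_, h₁, (x : R × R).2 - (x : R × R).1, x.2, P.sub_mem h₂ h₁, by simp⟩
  · rintro ⟨p, hp, i, -, hi, hx⟩
    exact ⟨by simpa [hx] using hp, by simpa [hx] using P.add_mem hp hi⟩

theorem comap_dupFst_ne_comap_dupSnd {a : R} (haI : a ∈ I) (haP : a ∉ P) :
    P.comap (dupFst R I) ≠ P.comap (dupSnd R I) := by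
  intro h
  have hmem : (⟨(0, a), mem_dup.mpr (by simpa using haI)⟩ : dup R I) ∈ P.comap (dupFst R I) :=
    P.zero_mem
  rw [h] at hmem
  exact haP hmem

end Duplication

/-- D'Anna's localization lemma, case `I ⊄ P`: the sets `P₁ ≠ P₂`, `P₁ ∩ P₂ = P₀`
(where `P₁` and `P₂` are the prime ideals `(dupFst)⁻¹(P)` and `(dupSnd)⁻¹(P)` of `R ⋈ I`),
and the localizations of `R ⋈ I` at `P₁` and at `P₂` are both ring-isomorphic to `R_P`. -/
theorem dup_localization_of_not_le (R : Type u) [CommRing R] (I P : Ideal R) [P.IsPrime]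
    (hIP : ¬ I ≤ P) :
    let P₀ : Set (dup R I) := {x | ∃ p ∈ P, ∃ i, i ∈ I ∧ i ∈ P ∧ (x : R × R) = (p, p + i)}
    let P₁ : Set (dup R I) := {x | ∃ p ∈ P, ∃ i ∈ I, (x : R × R) = (p, p + i)}
    let P₂ : Set (dup R I) := {x | ∃ p ∈ P, ∃ i ∈ I, (x : R × R) = (p + i, p)}
    P₁ ≠ P₂ ∧ P₁ ∩ P₂ = P₀ ∧
    ((P.comap (dupFst R I) : Ideal (dup R I)) : Set (dup R I)) = P₁ ∧
    ((P.comap (dupSnd R I) : Ideal (dup R I)) : Set (dup R I)) = P₂ ∧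
    Nonempty (Localization.AtPrime (P.comap (dupFst R I)) ≃+* Localization.AtPrime P) ∧
    Nonempty (Localization.AtPrime (P.comap (dupSnd R I)) ≃+* Localization.AtPrime P) := by
  obtain ⟨a, haI, haP⟩ := SetLike.not_le_iff_exists.mp hIP
  intro P₀ P₁ P₂
  have hP₁ : ((P.comap (dupFst R I) : Ideal (dup R I)) : Set (dup R I)) = P₁ :=
    coe_comap_dupFst P
  have hP₂ : ((P.comap (dupSnd R I) : Ideal (dup R I)) : Set (dup R I)) = P₂ :=
    coe_comap_dupSnd P
  refine ⟨?_, ?_, hP₁, hP₂, ?_, ?_⟩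
  · rw [← hP₁, ← hP₂, Ne, SetLike.coe_set_eq]
    exact comap_dupFst_ne_comap_dupSnd P haI haP
  · rw [← hP₁, ← hP₂, ← Submodule.coe_inf]
    exact coe_comap_dupFst_inf_comap_dupSnd P
  · refine nonempty_ringEquiv_localization_comap_of_surjective dupFst_surjective P fun x hx ↦ ?_
    obtain ⟨s, hs, hsx⟩ := exists_mul_eq_zero_of_mem_ker_dupFst haI hx
    exact ⟨s, hs ▸ haP, hsx⟩
  · refine nonempty_ringEquiv_localization_comap_of_surjective dupSnd_surjective P fun x hx ↦ ?_
    obtain ⟨s, hs, hsx⟩ := exists_mul_eq_zero_of_mem_ker_dupSnd haI hx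
    exact ⟨s, hs ▸ haP, hsx⟩

end Paper
end

section
/- Let R be a von Neumann regular commutative ring and let I be a proper ideal of R. Then the weak global dimension of R⋈I is 0, while for any maximal ideal m of R the ideal of R_m generated by the image of I is not a proper nonzero ideal of R_m (since R_m is a field). -/
universe u

open scoped TensorProduct

namespace Paper

/-! `R ⋈ I` is again von Neumann regular. Normalise quasi-inverses by `a = a²b, b = b²a`; they
are then unique, so for `r ≡ s (mod I)` the quasi-inverses `r', s'` have images in `R/I` that are
quasi-inverses of the same element, whence `r' ≡ s' (mod I)`.

Over a von Neumann regular ring every module is flat, since flatness is local at maximal ideals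
and each `R_m` is a field: if `a = a²b` then `ab` and `1 - ab` are complementary idempotents, one
of which becomes a unit in a local ring, making the image of `a` a unit or zero. The same
dichotomy shows that the image of an ideal in `R_m` is `⊥` or `⊤`. -/

section VNRegular

variable {R : Type*} [CommRing R]

lemma IsVNRegular.exists_quasiInverse (hR : IsVNRegular R) (a : R) :
    ∃ b, a = a * a * b ∧ b = b * b * a := by
  obtain ⟨c, hc⟩ := hR a
  exact ⟨a * c * c, by linear_combination (1 + a * c) * hc,
    by linear_combination (a * c * c * c + c * c) * hc⟩

lemma quasiInverse_unique {a b c : R} (hab : a = a * a * b) (hba : b = b * b * a)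
    (hac : a = a * a * c) (hca : c = c * c * a) : b = c := by
  have hbc : a * b = a * c := by linear_combination b * hac - c * hab
  linear_combination hba - hca + (b + c) * hbc

lemma isVNRegular_dup (hR : IsVNRegular R) (I : Ideal R) : IsVNRegular (dup R I) := by
  rintro ⟨⟨r, s⟩, hrs⟩
  obtain ⟨r', hr, hr'⟩ := hR.exists_quasiInverse r
  obtain ⟨s', hs, hs'⟩ := hR.exists_quasiInverse s
  set φ := Ideal.Quotient.mk I
  have hφs : φ s = φ r := Ideal.Quotient.eq.mpr hrs
  have hφ : φ r' = φ s' :=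
    quasiInverse_unique (a := φ r) (by simpa using congrArg φ hr) (by simpa using congrArg φ hr')
      (by simpa [hφs] using congrArg φ hs) (by simpa [hφs] using congrArg φ hs')
  exact ⟨⟨(r', s'), Ideal.Quotient.eq.mp hφ.symm⟩, Subtype.ext (Prod.ext hr hs)⟩

lemma IsVNRegular.isUnit_or_eq_zero {S : Type*} [CommRing S] [IsLocalRing S]
    (hR : IsVNRegular R) (f : R →+* S) (a : R) : IsUnit (f a) ∨ f a = 0 := by
  obtain ⟨b, hb⟩ := hR a
  have hsum : f (a * b) + f (1 - a * b) = 1 := by rw [← map_add, add_sub_cancel, map_one]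
  have hann : f a * f (1 - a * b) = 0 := by
    rw [← map_mul, ← map_zero f]; congr 1; linear_combination hb
  rcases IsLocalRing.isUnit_or_isUnit_of_add_one hsum with hu | hu
  · exact .inl (isUnit_of_mul_isUnit_left (by rwa [← map_mul]))
  · exact .inr (hu.mul_left_eq_zero.mp hann)

lemma IsVNRegular.map_eq_bot_or_eq_top {S : Type*} [CommRing S] [IsLocalRing S]
    (hR : IsVNRegular R) (f : R →+* S) (I : Ideal R) : I.map f = ⊥ ∨ I.map f = ⊤ := by
  by_cases h : ∃ i ∈ I, IsUnit (f i)
  · obtain ⟨i, hi, hu⟩ := h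
    exact .inr (Ideal.eq_top_of_isUnit_mem _ (Ideal.mem_map_of_mem f hi) hu)
  · refine .inl ((Ideal.map_eq_bot_iff_le_ker f).mpr fun i hi => ?_)
    exact ((hR.isUnit_or_eq_zero f i).resolve_left fun hu => h ⟨i, hi, hu⟩)

lemma IsVNRegular.isField_localization (hR : IsVNRegular R) (P : Ideal R) [P.IsPrime] :
    IsField (Localization.AtPrime P) := by
  rw [IsLocalRing.isField_iff_maximalIdeal_eq, ← Localization.AtPrime.map_eq_maximalIdeal]
  refine (hR.map_eq_bot_or_eq_top _ P).resolve_right ?_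
  rw [Localization.AtPrime.map_eq_maximalIdeal]
  exact (IsLocalRing.maximalIdeal.isMaximal _).ne_top

lemma IsVNRegular.flat (hR : IsVNRegular R) (M : Type*) [AddCommGroup M] [Module R M] :
    Module.Flat R M := by
  refine Module.flat_of_localized_maximal M fun P _ => ?_
  let := (hR.isField_localization P).toField
  exact Module.Flat.trans R (Localization.AtPrime P) _

lemma IsVNRegular.wdim_eq_zero {S : Type u} [CommRing S] (hS : IsVNRegular S) :
    wdim S = 0 := by
  refine le_antisymm (iSup_le fun M => iSup_le fun _ => iSup_le fun _ => ?_) zero_le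
  exact sInf_le ⟨0, rfl, hS.flat M⟩

end VNRegular

theorem wdim_dup_vnr_general (R : Type u) [CommRing R] (I : Ideal R)
    (hR : IsVNRegular R) :
    wdim (dup R I) = 0 ∧
    ∀ (m : Ideal R) [m.IsMaximal],
      ¬(I.map (algebraMap R (Localization.AtPrime m)) ≠ ⊥ ∧
        I.map (algebraMap R (Localization.AtPrime m)) ≠ ⊤) := by
  refine ⟨(isVNRegular_dup hR I).wdim_eq_zero, fun m _ ⟨hbot, htop⟩ => ?_⟩
  exact (hR.map_eq_bot_or_eq_top _ I).elim hbot htop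

/-- If `R` is von Neumann regular and `I` is a proper ideal of `R`, then `wdim (R ⋈ I) = 0`,
while for any maximal ideal `m` of `R` the ideal `I R_m` of `R_m` is not a proper nonzero
ideal. -/
theorem wdim_dup_vnr (R : Type u) [CommRing R] (I : Ideal R)
    (hR : IsVNRegular R) (hI : I ≠ ⊤) :
    wdim (dup R I) = 0 ∧
    ∀ (m : Ideal R) [m.IsMaximal],
      ¬(I.map (algebraMap R (Localization.AtPrime m)) ≠ ⊥ ∧
        I.map (algebraMap R (Localization.AtPrime m)) ≠ ⊤) :=
  wdim_dup_vnr_general R I hR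

end Paper
end
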